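/- Let A ∈ ℝ^{m×n}, b ∈ ℝ^m, L ∈ ℝ^{s×n} with full column rank, {W_i}_{i=1}^{M} with Σ_{i=1}^{M} W_i W_iᵀ = I_m, and τ(1), τ(2), … i.i.d. uniform on {1,…,M}. Let Λ_i ∈ ℝ with Σ_{i=1}^{k}Λ_i > 0 for all k and suppose λ := lim_{k→∞} (M/k)Σ_{i=1}^{k}Λ_i exists and is positive. Define x_k = (Σ_{i=1}^{k}Λ_i LᵀL + Σ_{i=1}^{k} A_{τ(i)}ᵀA_{τ(i)})^{-1} Σ_{i=1}^{k} A_{τ(i)}ᵀ b_{τ(i)}. Then x_k → (AᵀA + λLᵀL)^{-1}Aᵀb almost surely as k → ∞. -/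

import Mathlib

open Matrix Finset Filter MeasureTheory ProbabilityTheory Topology

/-! By the strong law of large numbers, almost surely every index `j` is sampled with limiting
frequency `1/M`, so `(M/k) Σ_{i<k} F (τ i) → Σ_j F j` for every `F`; because
`Σ_j W_j W_jᵀ = I` these limits are `AᵀA` and `Aᵀb`. Scaling the normal equations by `M/k` does
not change `x_k` and makes the system matrix converge to `AᵀA + λLᵀL`, which is positive definite
since `L` has full column rank, and matrix inversion is continuous there. -/

theorem Matrix.mulVec_injective_of_rank_eq_card {K m n : Type*} [Field K] [Fintype n]
    {L : Matrix m n K} (hL : L.rank = Fintype.card n) : Function.Injective L.mulVec := by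
  have h := LinearMap.finrank_range_add_finrank_ker L.mulVecLin
  rw [Module.finrank_fintype_fun_eq_card, ← Matrix.rank, hL, add_eq_left,
    Submodule.finrank_eq_zero, LinearMap.ker_eq_bot] at h
  exact h

/-- Both sides are the junk value `0` when `A` is singular. -/
theorem Matrix.inv_smul_of_ne_zero {K n : Type*} [Field K] [Fintype n] [DecidableEq n]
    {c : K} (hc : c ≠ 0) (A : Matrix n n K) : (c • A)⁻¹ = c⁻¹ • A⁻¹ := by
  by_cases hA : IsUnit A.det
  · exact inv_smul' A (Units.mk0 c hc) hA
  · have hcA : ¬IsUnit (c • A).det := by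
      rwa [det_smul, IsUnit.mul_iff, not_and_or, or_iff_right (by simpa using pow_ne_zero _ hc)]
    rw [nonsing_inv_apply_not_isUnit _ hA, nonsing_inv_apply_not_isUnit _ hcA, smul_zero]

theorem Matrix.tendsto_inv_mulVec {ι K n : Type*} [Field K] [TopologicalSpace K]
    [IsTopologicalRing K] [ContinuousInv₀ K] [Fintype n] [DecidableEq n] {l : Filter ι}
    {S : ι → Matrix n n K} {B : Matrix n n K} {v : ι → n → K} {u : n → K}
    (hS : Tendsto S l (𝓝 B)) (hB : B.det ≠ 0) (hv : Tendsto v l (𝓝 u)) :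
    Tendsto (fun i => (S i)⁻¹ *ᵥ v i) l (𝓝 (B⁻¹ *ᵥ u)) := by
  have hinv : ContinuousAt Inv.inv B :=
    continuousAt_matrix_inv B (by rw [Ring.inverse_eq_inv']; exact continuousAt_inv₀ hB)
  exact ((continuous_fst.matrix_mulVec continuous_snd).tendsto _).comp
    ((hinv.tendsto.comp hS).prodMk_nhds hv)

theorem Matrix.sum_transpose_mul_self_of_sum_mul_transpose_eq_one {ι m n l R : Type*}
    [Fintype ι] [Fintype m] [Fintype l] [DecidableEq m] [CommSemiring R]
    {W : ι → Matrix m l R} (hW : ∑ i, W i * (W i)ᵀ = 1) (A : Matrix m n R) :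
    ∑ i, ((W i)ᵀ * A)ᵀ * ((W i)ᵀ * A) = Aᵀ * A := by
  calc ∑ i, ((W i)ᵀ * A)ᵀ * ((W i)ᵀ * A) = ∑ i, Aᵀ * (W i * (W i)ᵀ) * A := by
        simp only [transpose_mul, transpose_transpose, Matrix.mul_assoc]
    _ = Aᵀ * A := by rw [← Matrix.sum_mul, ← Matrix.mul_sum, hW, Matrix.mul_one]

theorem Matrix.sum_transpose_mulVec_of_sum_mul_transpose_eq_one {ι m n l R : Type*}
    [Fintype ι] [Fintype m] [Fintype l] [DecidableEq m] [CommSemiring R]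
    {W : ι → Matrix m l R} (hW : ∑ i, W i * (W i)ᵀ = 1) (A : Matrix m n R) (b : m → R) :
    ∑ i, ((W i)ᵀ * A)ᵀ *ᵥ ((W i)ᵀ *ᵥ b) = Aᵀ *ᵥ b := by
  calc ∑ i, ((W i)ᵀ * A)ᵀ *ᵥ ((W i)ᵀ *ᵥ b) = ∑ i, (Aᵀ * (W i * (W i)ᵀ)) *ᵥ b := by
        simp only [transpose_mul, transpose_transpose, mulVec_mulVec, Matrix.mul_assoc]
    _ = Aᵀ *ᵥ b := by rw [← sum_mulVec, ← Matrix.mul_sum, hW, Matrix.mul_one]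

theorem tendsto_smul_sum_comp_of_tendsto_frequency {α E : Type*} [Fintype α] [DecidableEq α]
    [AddCommMonoid E] [Module ℝ E] [TopologicalSpace E] [ContinuousAdd E] [ContinuousSMul ℝ E]
    {t : ℕ → α} {c : ℝ} (hc : c ≠ 0)
    (ht : ∀ a, Tendsto (fun k : ℕ => (#{i ∈ range k | t i = a} : ℝ) / k) atTop (𝓝 c⁻¹))
    (F : α → E) :
    Tendsto (fun k : ℕ => (c / k) • ∑ i ∈ range k, F (t i)) atTop (𝓝 (∑ a, F a)) := by
  have hsplit : ∀ k : ℕ, (c / k) • ∑ i ∈ range k, F (t i) =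
      ∑ a, (c * ((#{i ∈ range k | t i = a} : ℝ) / k)) • F a := by
    intro k
    rw [← sum_fiberwise' (range k) t F, smul_sum]
    refine sum_congr rfl fun a _ => ?_
    rw [sum_const, ← Nat.cast_smul_eq_nsmul ℝ, smul_smul]
    ring_nf
  simp_rw [hsplit]
  refine tendsto_finsetSum _ fun a _ => ?_
  simpa [mul_inv_cancel₀ hc] using ((ht a).const_mul c).smul_const (F a)

theorem ae_tendsto_frequency {Ω α : Type*} [MeasurableSpace Ω] [MeasurableSpace α]
    [MeasurableSingletonClass α] [Countable α] [DecidableEq α] {μ : Measure Ω} [IsFiniteMeasure μ]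
    {τ : ℕ → Ω → α} (hindep : Pairwise fun i j => IndepFun (τ i) (τ j) μ)
    (hident : ∀ i, IdentDistrib (τ i) (τ 0) μ μ) :
    ∀ᵐ ω ∂μ, ∀ a, Tendsto (fun k : ℕ => (#{i ∈ range k | τ i ω = a} : ℝ) / k) atTop
      (𝓝 (μ.real (τ 0 ⁻¹' {a}))) := by
  rw [ae_all_iff]
  intro a
  set f : α → ℝ := ({a} : Set α).indicator 1
  have hf : Measurable f := measurable_one.indicator (measurableSet_singleton a)
  have hτ : AEMeasurable (τ 0) μ := (hident 0).aemeasurable_fst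
  have hfτ : Integrable (f ∘ τ 0) μ :=
    ((integrable_const 1).indicator (measurableSet_singleton a)).comp_aemeasurable hτ
  have hmean : μ[f ∘ τ 0] = μ.real (τ 0 ⁻¹' {a}) := by
    rw [Function.comp_def, ← integral_map hτ hf.aestronglyMeasurable,
      integral_indicator_one (measurableSet_singleton a),
      measureReal_def, Measure.map_apply_of_aemeasurable hτ (measurableSet_singleton a),
      ← measureReal_def]
  have hlaw := strong_law_ae_real (fun i => f ∘ τ i) hfτ (fun i j hij => (hindep hij).comp hf hf)
    (fun i => (hident i).comp hf)
  filter_upwards [hlaw] with ω hω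
  rw [hmean] at hω
  simpa only [f, Function.comp_apply, Set.indicator_apply, Set.mem_singleton_iff, Pi.one_apply,
    sum_boole] using hω

theorem sTik_random_sampling_as_convergence_general
    {m n s ℓ M : ℕ} (hM : 0 < M)
    (A : Matrix (Fin m) (Fin n) ℝ) (b : Fin m → ℝ)
    (L : Matrix (Fin s) (Fin n) ℝ) (hL : L.rank = n)
    (W : Fin M → Matrix (Fin m) (Fin ℓ) ℝ)
    (hW : ∑ i, W i * (W i)ᵀ = (1 : Matrix (Fin m) (Fin m) ℝ))
    (Ai : Fin M → Matrix (Fin ℓ) (Fin n) ℝ) (hAi : ∀ i, Ai i = (W i)ᵀ * A)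
    (bi : Fin M → Fin ℓ → ℝ) (hbi : ∀ i, bi i = (W i)ᵀ.mulVec b)
    (lam : ℕ → ℝ)
    (lam0 : ℝ) (hlam0 : 0 < lam0)
    (hlim : Tendsto (fun k : ℕ => (M : ℝ) / (k : ℝ) * lam k) atTop (nhds lam0))
    {Ω : Type*} [MeasurableSpace Ω] (μ : Measure Ω) [IsProbabilityMeasure μ]
    (τ : ℕ → Ω → Fin M) (hmeas : ∀ k, Measurable (τ k))
    (hindep : iIndepFun τ μ)
    (hunif : ∀ k, ∀ i : Fin M, μ (τ k ⁻¹' {i}) = (M : ENNReal)⁻¹)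
    (x : ℕ → Ω → Fin n → ℝ)
    (hx : ∀ k ω, x k ω =
      (lam k • (Lᵀ * L) + ∑ i ∈ Finset.range k, (Ai (τ i ω))ᵀ * Ai (τ i ω))⁻¹.mulVec
        (∑ i ∈ Finset.range k, (Ai (τ i ω))ᵀ.mulVec (bi (τ i ω)))) :
    ∀ᵐ ω ∂μ, Tendsto (fun k => x k ω) atTop
      (nhds ((Aᵀ * A + lam0 • (Lᵀ * L))⁻¹.mulVec (Aᵀ.mulVec b))) := by
  obtain rfl : Ai = fun i => (W i)ᵀ * A := funext hAi
  obtain rfl : bi = fun i => (W i)ᵀ *ᵥ b := funext hbi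
  have hM0 : (M : ℝ) ≠ 0 := Nat.cast_ne_zero.2 hM.ne'
  have hLL : (Lᵀ * L).PosDef :=
    PosDef.conjTranspose_mul_self L (mulVec_injective_of_rank_eq_card (by simpa using hL))
  have hdet : (Aᵀ * A + lam0 • (Lᵀ * L)).det ≠ 0 :=
    (PosDef.posSemidef_add (posSemidef_conjTranspose_mul_self A) (hLL.smul hlam0)).det_pos.ne'
  have hident : ∀ k, IdentDistrib (τ k) (τ 0) μ μ := fun k =>
    ⟨(hmeas k).aemeasurable, (hmeas 0).aemeasurable, Measure.ext_of_singleton fun a => by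
      rw [Measure.map_apply (hmeas k) (measurableSet_singleton a),
        Measure.map_apply (hmeas 0) (measurableSet_singleton a), hunif, hunif]⟩
  filter_upwards [ae_tendsto_frequency (fun i j hij => hindep.indepFun hij) hident] with ω hω
  simp only [measureReal_def, hunif, ENNReal.toReal_inv, ENNReal.toReal_natCast] at hω
  have hS : Tendsto (fun k : ℕ => ((M : ℝ) / k) • (lam k • (Lᵀ * L) +
      ∑ i ∈ range k, ((W (τ i ω))ᵀ * A)ᵀ * ((W (τ i ω))ᵀ * A))) atTop
      (𝓝 (Aᵀ * A + lam0 • (Lᵀ * L))) := by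
    rw [add_comm, ← sum_transpose_mul_self_of_sum_mul_transpose_eq_one hW]
    refine ((hlim.smul_const _).add (tendsto_smul_sum_comp_of_tendsto_frequency hM0 hω _)).congr
      fun k => ?_
    rw [smul_add, smul_smul]
  have hv := tendsto_smul_sum_comp_of_tendsto_frequency hM0 hω
    fun j => ((W j)ᵀ * A)ᵀ *ᵥ ((W j)ᵀ *ᵥ b)
  rw [sum_transpose_mulVec_of_sum_mul_transpose_eq_one hW] at hv
  refine (tendsto_inv_mulVec hS hdet hv).congr' ?_
  filter_upwards [eventually_ne_atTop 0] with k hk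
  have hc : (M : ℝ) / k ≠ 0 := div_ne_zero hM0 (Nat.cast_ne_zero.2 hk)
  rw [hx, inv_smul_of_ne_zero hc, smul_mulVec, mulVec_smul, inv_smul_smul₀ hc]

/-- with i.i.d. uniform sampling indices and regularization increments
`Λ_i` whose Cesàro-type averages `(M/k)Σ_{i≤k}Λ_i` converge to `λ > 0`, the sampled
Tikhonov iterates converge almost surely to the Tikhonov solution `(AᵀA + λLᵀL)⁻¹Aᵀb`. -/
theorem sTik_random_sampling_as_convergence
    {m n s ℓ M : ℕ} (hM : 0 < M)
    (A : Matrix (Fin m) (Fin n) ℝ) (b : Fin m → ℝ)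
    (L : Matrix (Fin s) (Fin n) ℝ) (hL : L.rank = n)
    (W : Fin M → Matrix (Fin m) (Fin ℓ) ℝ)
    (hW : ∑ i, W i * (W i)ᵀ = (1 : Matrix (Fin m) (Fin m) ℝ))
    (Ai : Fin M → Matrix (Fin ℓ) (Fin n) ℝ) (hAi : ∀ i, Ai i = (W i)ᵀ * A)
    (bi : Fin M → Fin ℓ → ℝ) (hbi : ∀ i, bi i = (W i)ᵀ.mulVec b)
    (Lam : ℕ → ℝ) (lam : ℕ → ℝ)
    (hlamdef : ∀ j, lam j = ∑ i ∈ Finset.range j, Lam i)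
    (hpos : ∀ k, 0 < k → 0 < lam k)
    (lam0 : ℝ) (hlam0 : 0 < lam0)
    (hlim : Tendsto (fun k : ℕ => (M : ℝ) / (k : ℝ) * lam k) atTop (nhds lam0))
    {Ω : Type*} [MeasurableSpace Ω] (μ : Measure Ω) [IsProbabilityMeasure μ]
    (τ : ℕ → Ω → Fin M) (hmeas : ∀ k, Measurable (τ k))
    (hindep : iIndepFun τ μ)
    (hunif : ∀ k, ∀ i : Fin M, μ (τ k ⁻¹' {i}) = (M : ENNReal)⁻¹)
    (x : ℕ → Ω → Fin n → ℝ)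
    (hx : ∀ k ω, x k ω =
      (lam k • (Lᵀ * L) + ∑ i ∈ Finset.range k, (Ai (τ i ω))ᵀ * Ai (τ i ω))⁻¹.mulVec
        (∑ i ∈ Finset.range k, (Ai (τ i ω))ᵀ.mulVec (bi (τ i ω)))) :
    ∀ᵐ ω ∂μ, Tendsto (fun k => x k ω) atTop
      (nhds ((Aᵀ * A + lam0 • (Lᵀ * L))⁻¹.mulVec (Aᵀ.mulVec b))) :=
  sTik_random_sampling_as_convergence_general hM A b L hL W hW Ai hAi bi hbi lam lam0 hlam0 hlim μ τ
    hmeas hindep hunif x hx
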